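/- For all integers n, m with 0 < m < n, every k = 1,…,2n and every integer s with 0 ≤ s ≤ n−m, the first n−m+1 moments of each wavelet vanish: ∫_{−1}^{1} x^s ψ_{n,k}^m(x) w(x) dx = 0. -/

import Mathlib

open Real MeasureTheory Finset

/-- Chebyshev nodes of the first kind: `x_k^n = cos((2k-1)π/(2n))`. -/
noncomputable def chebNode (n k : ℕ) : ℝ :=
  Real.cos ((2 * (k : ℝ) - 1) * Real.pi / (2 * (n : ℝ)))

/-- Orthonormal Chebyshev polynomials of the first kind. -/
noncomputable def chebP (r : ℕ) (x : ℝ) : ℝ :=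
  if r = 0 then Real.sqrt (1 / Real.pi)
  else Real.sqrt (2 / Real.pi) * Real.cos ((r : ℝ) * Real.arccos x)

/-- Darboux kernel `K_r(x,y) = Σ_{s=0}^r p_s(x) p_s(y)`. -/
noncomputable def darboux (r : ℕ) (x y : ℝ) : ℝ :=
  ∑ s ∈ Finset.range (r + 1), chebP s x * chebP s y

/-- de la Vallée Poussin kernel `v_n^m(x,y) = (1/(2m)) Σ_{r=n-m}^{n+m-1} K_r(x,y)`. -/
noncomputable def vpK (n m : ℕ) (x y : ℝ) : ℝ :=
  (1 / (2 * (m : ℝ))) * ∑ r ∈ Finset.Icc (n - m) (n + m - 1), darboux r x y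

/-- The Chebyshev weight `w(x) = 1/√(1-x²)`. -/
noncomputable def chebW (x : ℝ) : ℝ := 1 / Real.sqrt (1 - x ^ 2)

/-- Scaling functions `Φ_{n,k}^m(x) = (π/n) v_n^m(x_k^n, x)`. -/
noncomputable def scal (n m k : ℕ) (x : ℝ) : ℝ :=
  (Real.pi / (n : ℝ)) * vpK n m (chebNode n k) x

/-- The nodes `y_k^n`, `k = 1,…,2n`: the Chebyshev nodes of order `3n` not of order `n`. -/
noncomputable def yNode (n k : ℕ) : ℝ := chebNode (3 * n) (3 * k / 2)

/-- Wavelet functions `ψ_{n,k}^m`. -/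
noncomputable def wav (n m k : ℕ) (x : ℝ) : ℝ :=
  (Real.pi / (3 * (n : ℝ))) * vpK (3 * n) m (yNode n k) x -
    ∑ h ∈ Finset.Icc 1 n,
      scal n m h (yNode n k) * ((Real.pi / (3 * (n : ℝ))) * vpK (3 * n) m (chebNode n h) x)

/-- Filter coefficients `μ_{n,r}^m`. -/
noncomputable def muC (n m r : ℕ) : ℝ :=
  if r ≤ n - m then 1
  else if r < n + m then ((m : ℝ) + (n : ℝ) - (r : ℝ)) / (2 * (m : ℝ))
  else 0

/-- Squared norms `ν_{n,r}^m` of the orthogonal scaling basis. -/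
noncomputable def nuC (n m r : ℕ) : ℝ :=
  if r ≤ n - m then 1 else ((m : ℝ) ^ 2 + ((n : ℝ) - (r : ℝ)) ^ 2) / (2 * (m : ℝ) ^ 2)

/-- Orthogonal scaling basis `Φ_{n,r}^⊥`. -/
noncomputable def scalPerp (n m r : ℕ) (x : ℝ) : ℝ :=
  if r ≤ n - m then chebP r x
  else muC n m r * chebP r x - muC n m (2 * n - r) * chebP (2 * n - r) x

/-- The sup norm on `[-1,1]`. -/
noncomputable def supNorm (f : ℝ → ℝ) : ℝ := ⨆ x : Set.Icc (-1 : ℝ) 1, |f x|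

/-- The Lebesgue constant `c_∞ = max_{|x|≤1} ∫_{-1}^1 |v_n^m(x,y)| w(y) dy`. -/
noncomputable def cInf (n m : ℕ) : ℝ :=
  ⨆ x : Set.Icc (-1 : ℝ) 1, ∫ y in (-1 : ℝ)..1, |vpK n m x y| * chebW y




lemma chebW_nonneg (x : ℝ) : 0 ≤ chebW x := by
  unfold chebW; positivity

lemma chebW_meas : Measurable chebW := by
  unfold chebW
  simp only [one_div]
  exact ((continuous_const.sub (continuous_pow 2)).sqrt).measurable.inv

lemma chebW_intInt : IntervalIntegrable chebW volume (-1 : ℝ) 1 := by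
  apply intervalIntegral.intervalIntegrable_deriv_of_nonneg (g := fun x => - Real.arccos x)
  · exact Real.continuous_arccos.neg.continuousOn
  · intro x hx
    rw [show ((-1:ℝ) ⊓ 1) = -1 by norm_num, show ((-1:ℝ) ⊔ 1) = 1 by norm_num] at hx
    have := (Real.hasDerivAt_arccos (ne_of_gt hx.1) (ne_of_lt hx.2)).neg
    rw [show chebW x = -(-(1 / Real.sqrt (1 - x ^ 2))) by simp [chebW]]
    exact this
  · intro x _; exact chebW_nonneg x

lemma intCos (s : ℕ) (c : ℝ) :
    IntervalIntegrable (fun x => x ^ s * Real.cos (c * Real.arccos x) * chebW x)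
      volume (-1 : ℝ) 1 := by
  apply chebW_intInt.mono_fun'
  · exact (((continuous_pow s).measurable.mul
      (Real.continuous_cos.comp (continuous_const.mul Real.continuous_arccos)).measurable).mul
      chebW_meas).aestronglyMeasurable
  · rw [Filter.EventuallyLE, ae_restrict_iff' measurableSet_uIoc]
    refine Filter.Eventually.of_forall fun x hx => ?_
    rw [Set.uIoc_of_le (by norm_num : (-1:ℝ) ≤ 1)] at hx
    have hx1 : |x| ≤ 1 := abs_le.2 ⟨hx.1.le, hx.2⟩
    have h1 : |x ^ s| ≤ 1 := by
      rw [abs_pow]; exact pow_le_one₀ (abs_nonneg x) hx1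
    have h2 : |Real.cos (c * Real.arccos x)| ≤ 1 := Real.abs_cos_le_one _
    calc ‖x ^ s * Real.cos (c * Real.arccos x) * chebW x‖
        = |x ^ s| * |Real.cos (c * Real.arccos x)| * |chebW x| := by
          simp [abs_mul, Real.norm_eq_abs]
      _ ≤ 1 * 1 * |chebW x| := by gcongr
      _ = chebW x := by simp [abs_of_nonneg (chebW_nonneg x)]

lemma intBase (c : ℕ) (hc : 1 ≤ c) :
    ∫ x in (-1:ℝ)..1, Real.cos ((c:ℝ) * Real.arccos x) * chebW x = 0 := by
  have hc0 : (c:ℝ) ≠ 0 := Nat.cast_ne_zero.2 (by omega)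
  have key := intervalIntegral.integral_eq_sub_of_hasDeriv_right_of_le
    (f := fun x => -(1/(c:ℝ)) * Real.sin ((c:ℝ) * Real.arccos x))
    (f' := fun x => Real.cos ((c:ℝ) * Real.arccos x) * chebW x)
    (by norm_num : (-1:ℝ) ≤ 1)
    (by
      apply Continuous.continuousOn
      exact continuous_const.mul
        (Real.continuous_sin.comp (continuous_const.mul Real.continuous_arccos)))
    (fun x hx => by
      have hd := Real.hasDerivAt_arccos (ne_of_gt hx.1) (ne_of_lt hx.2)
      have h2 : HasDerivAt (fun x => -(1/(c:ℝ)) * Real.sin ((c:ℝ) * Real.arccos x))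
          (-(1/(c:ℝ)) * (Real.cos ((c:ℝ) * Real.arccos x) * ((c:ℝ) * (-(1 / Real.sqrt (1 - x ^ 2)))))) x :=
        ((hd.const_mul (c:ℝ)).sin).const_mul _
      have h3 : (-(1/(c:ℝ)) * (Real.cos ((c:ℝ) * Real.arccos x) * ((c:ℝ) * (-(1 / Real.sqrt (1 - x ^ 2))))))
          = Real.cos ((c:ℝ) * Real.arccos x) * chebW x := by
        unfold chebW; field_simp
      rw [h3] at h2
      exact h2.hasDerivWithinAt)
    (by simpa using intCos 0 (c:ℝ))
  rw [key]
  simp [Real.arccos_one, Real.arccos_neg_one, Real.sin_nat_mul_pi]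

lemma Jzero : ∀ s t : ℕ, s < t →
    (∫ x in (-1:ℝ)..1, x ^ s * Real.cos ((t:ℝ) * Real.arccos x) * chebW x) = 0 := by
  intro s
  induction s with
  | zero =>
    intro t ht
    rw [show (fun x : ℝ => x ^ 0 * Real.cos ((t:ℝ) * Real.arccos x) * chebW x)
        = fun x : ℝ => Real.cos ((t:ℝ) * Real.arccos x) * chebW x from by funext x; ring]
    exact intBase t ht
  | succ s ih =>
    intro t ht
    obtain ⟨u, rfl⟩ : ∃ u, t = u + 1 := ⟨t - 1, by omega⟩
    have hu : s < u := by omega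
    have heq : Set.EqOn
        (fun x : ℝ => x ^ (s+1) * Real.cos (((u+1:ℕ):ℝ) * Real.arccos x) * chebW x)
        (fun x : ℝ => (1/2) * (x ^ s * Real.cos (((u+2:ℕ):ℝ) * Real.arccos x) * chebW x)
          + (1/2) * (x ^ s * Real.cos ((u:ℝ) * Real.arccos x) * chebW x))
        (Set.uIcc (-1:ℝ) 1) := by
      intro x hx
      rw [Set.uIcc_of_le (by norm_num : (-1:ℝ) ≤ 1)] at hx
      have hcx : Real.cos (Real.arccos x) = x := Real.cos_arccos hx.1 hx.2
      have trig : Real.cos (((u+2:ℕ):ℝ) * Real.arccos x) + Real.cos ((u:ℝ) * Real.arccos x)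
          = 2 * Real.cos (((u+1:ℕ):ℝ) * Real.arccos x) * Real.cos (Real.arccos x) := by
        push_cast
        have e1 : ((u:ℝ)+2) * Real.arccos x = ((u:ℝ)+1) * Real.arccos x + Real.arccos x := by ring
        have e2 : (u:ℝ) * Real.arccos x = ((u:ℝ)+1) * Real.arccos x - Real.arccos x := by ring
        rw [e1, e2, Real.cos_add, Real.cos_sub]; ring
      simp only
      have hxx : x ^ (s+1) = x ^ s * Real.cos (Real.arccos x) := by rw [hcx, pow_succ]
      rw [hxx]
      linear_combination (-(x ^ s * chebW x) / 2) * trig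
    rw [intervalIntegral.integral_congr heq,
      intervalIntegral.integral_add ((intCos s ((u+2:ℕ):ℝ)).const_mul _)
        ((intCos s ((u:ℕ):ℝ)).const_mul _),
      intervalIntegral.integral_const_mul, intervalIntegral.integral_const_mul,
      ih (u+2) (by omega), ih u hu]
    norm_num

lemma sum_cos_tele (α : ℝ) (n : ℕ) :
    2 * Real.sin α * ∑ h ∈ Finset.range n, Real.cos ((2*(h:ℝ)+1) * α)
      = Real.sin (2*(n:ℝ)*α) := by
  induction n with
  | zero => simp
  | succ n ih =>
    rw [Finset.sum_range_succ, mul_add, ih]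
    push_cast
    have e : 2*((n:ℝ)+1)*α = 2*(n:ℝ)*α + α + α := by ring
    have e2 : (2*(n:ℝ)+1)*α = 2*(n:ℝ)*α + α := by ring
    rw [e, e2, Real.sin_add, Real.sin_add, Real.cos_add]
    have pyth := Real.sin_sq_add_cos_sq α
    linear_combination (-Real.sin (2*(n:ℝ)*α)) * pyth

lemma Szero (n : ℕ) (hn : 0 < n) (c : ℝ)
    (h1 : Real.sin (c * Real.pi / (2*(n:ℝ))) ≠ 0) (h2 : Real.sin (c * Real.pi) = 0) :
    ∑ h ∈ Finset.Icc 1 n, Real.cos (c * ((2*(h:ℝ)-1) * Real.pi / (2*(n:ℝ)))) = 0 := by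
  have hn' : (n:ℝ) ≠ 0 := Nat.cast_ne_zero.2 hn.ne'
  set α := c * Real.pi / (2*(n:ℝ)) with hα
  have hre : ∀ h : ℕ, c * ((2*(h:ℝ)-1) * Real.pi / (2*(n:ℝ))) = (2*(h:ℝ)+1-2) * α := by
    intro h; rw [hα]; field_simp; ring
  have hsum : ∑ h ∈ Finset.Icc 1 n, Real.cos (c * ((2*(h:ℝ)-1) * Real.pi / (2*(n:ℝ))))
      = ∑ i ∈ Finset.range n, Real.cos ((2*(i:ℝ)+1) * α) := by
    rw [← Finset.Ico_add_one_right_eq_Icc, Finset.sum_Ico_eq_sum_range]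
    simp only [Nat.add_sub_cancel]
    apply Finset.sum_congr rfl
    intro i _
    rw [hre]
    push_cast
    ring_nf
  have h2' : Real.sin (2*(n:ℝ)*α) = 0 := by
    rw [show 2*(n:ℝ)*α = c * Real.pi by rw [hα]; field_simp]
    exact h2
  have tele := sum_cos_tele α n
  rw [h2'] at tele
  rw [hsum]
  rcases mul_eq_zero.1 tele with h | h
  · rcases mul_eq_zero.1 h with h' | h'
    · norm_num at h'
    · exact absurd h' h1
  · exact h

lemma chebNode_arccos (n h : ℕ) (hn : 0 < n) (h1 : 1 ≤ h) (h2 : h ≤ n) :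
    Real.arccos (chebNode n h) = (2*(h:ℝ)-1) * Real.pi / (2*(n:ℝ)) := by
  have hπ := Real.pi_pos
  have hh : (1:ℝ) ≤ (h:ℝ) := by exact_mod_cast h1
  have hhn : (h:ℝ) ≤ (n:ℝ) := by exact_mod_cast h2
  have hn' : (0:ℝ) < (n:ℝ) := by exact_mod_cast hn
  unfold chebNode
  apply Real.arccos_cos
  · apply div_nonneg _ (by positivity)
    nlinarith
  · rw [div_le_iff₀ (by positivity)]
    nlinarith

lemma sin_ne_zero_of_lt (n : ℕ) (hn : 0 < n) (c : ℝ) (hc0 : c ≠ 0) (hc : |c| < 2*(n:ℝ)) :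
    Real.sin (c * Real.pi / (2*(n:ℝ))) ≠ 0 := by
  have hπ := Real.pi_pos
  have hn' : (0:ℝ) < (n:ℝ) := by exact_mod_cast hn
  rcases lt_or_gt_of_ne hc0 with h | h
  · have : Real.sin (c * Real.pi / (2*(n:ℝ))) < 0 := by
      have h1 : -Real.pi < c * Real.pi / (2*(n:ℝ)) := by
        rw [lt_div_iff₀ (by positivity)]
        have := abs_lt.1 hc
        nlinarith [this.1]
      have h2 : c * Real.pi / (2*(n:ℝ)) < 0 := by
        apply div_neg_of_neg_of_pos _ (by positivity)
        nlinarith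
      exact Real.sin_neg_of_neg_of_neg_pi_lt h2 h1
    linarith [this]
  · have : 0 < Real.sin (c * Real.pi / (2*(n:ℝ))) := by
      apply Real.sin_pos_of_pos_of_lt_pi
      · positivity
      · rw [div_lt_iff₀ (by positivity)]
        have := abs_lt.1 hc
        nlinarith [this.2]
    linarith [this]

lemma disc_orth (n t u : ℕ) (hn : 0 < n) (htu : t + u < 2*n) :
    (Real.pi/(n:ℝ)) * ∑ h ∈ Finset.Icc 1 n, chebP t (chebNode n h) * chebP u (chebNode n h)
      = if t = u then 1 else 0 := by
  have hπ := Real.pi_pos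
  have hn' : (0:ℝ) < (n:ℝ) := by exact_mod_cast hn
  have hnode : ∀ h ∈ Finset.Icc 1 n, ∀ r : ℕ,
      chebP r (chebNode n h) = if r = 0 then Real.sqrt (1/Real.pi)
        else Real.sqrt (2/Real.pi) * Real.cos ((r:ℝ) * ((2*(h:ℝ)-1) * Real.pi / (2*(n:ℝ)))) := by
    intro h hh r
    rw [Finset.mem_Icc] at hh
    unfold chebP
    rw [chebNode_arccos n h hn hh.1 hh.2]
  rcases Nat.eq_zero_or_pos t with ht0 | ht1
  · rcases Nat.eq_zero_or_pos u with hu0 | hu1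
    · subst ht0; subst hu0
      simp only [if_pos rfl]
      rw [Finset.sum_congr rfl (fun h hh => by rw [hnode h hh 0, if_pos rfl])]
      rw [Finset.sum_const, Nat.card_Icc, Nat.add_sub_cancel]
      rw [Real.mul_self_sqrt (by positivity)]
      rw [nsmul_eq_mul, if_pos trivial]
      field_simp
    · -- t = 0, u ≥ 1
      subst ht0
      rw [if_neg (by omega)]
      rw [Finset.sum_congr rfl (fun h hh => by
        rw [hnode h hh 0, hnode h hh u, if_pos rfl, if_neg (by omega)])]
      have : ∑ h ∈ Finset.Icc 1 n, Real.sqrt (1/Real.pi) *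
          (Real.sqrt (2/Real.pi) * Real.cos ((u:ℝ) * ((2*(h:ℝ)-1) * Real.pi / (2*(n:ℝ)))))
          = Real.sqrt (1/Real.pi) * Real.sqrt (2/Real.pi) *
            ∑ h ∈ Finset.Icc 1 n, Real.cos ((u:ℝ) * ((2*(h:ℝ)-1) * Real.pi / (2*(n:ℝ)))) := by
        rw [Finset.mul_sum]; apply Finset.sum_congr rfl; intro h _; ring
      rw [this, Szero n hn (u:ℝ)
        (sin_ne_zero_of_lt n hn _ (Nat.cast_ne_zero.2 (by omega)) (by
          rw [abs_of_nonneg (by positivity)]; exact_mod_cast by omega))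
        (by exact_mod_cast Real.sin_nat_mul_pi u)]
      ring
  · rcases Nat.eq_zero_or_pos u with hu0 | hu1
    · subst hu0
      rw [if_neg (by omega)]
      rw [Finset.sum_congr rfl (fun h hh => by
        rw [hnode h hh t, hnode h hh 0, if_pos rfl, if_neg (by omega)])]
      have : ∑ h ∈ Finset.Icc 1 n, (Real.sqrt (2/Real.pi) *
          Real.cos ((t:ℝ) * ((2*(h:ℝ)-1) * Real.pi / (2*(n:ℝ))))) * Real.sqrt (1/Real.pi)
          = Real.sqrt (1/Real.pi) * Real.sqrt (2/Real.pi) *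
            ∑ h ∈ Finset.Icc 1 n, Real.cos ((t:ℝ) * ((2*(h:ℝ)-1) * Real.pi / (2*(n:ℝ)))) := by
        rw [Finset.mul_sum]; apply Finset.sum_congr rfl; intro h _; ring
      rw [this, Szero n hn (t:ℝ)
        (sin_ne_zero_of_lt n hn _ (Nat.cast_ne_zero.2 (by omega)) (by
          rw [abs_of_nonneg (by positivity)]; exact_mod_cast by omega))
        (by exact_mod_cast Real.sin_nat_mul_pi t)]
      ring
    · -- t, u ≥ 1
      rw [Finset.sum_congr rfl (fun h hh => by
        rw [hnode h hh t, hnode h hh u, if_neg (by omega), if_neg (by omega)])]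
      have prod : ∀ h : ℕ,
          (Real.sqrt (2/Real.pi) * Real.cos ((t:ℝ) * ((2*(h:ℝ)-1) * Real.pi / (2*(n:ℝ))))) *
          (Real.sqrt (2/Real.pi) * Real.cos ((u:ℝ) * ((2*(h:ℝ)-1) * Real.pi / (2*(n:ℝ)))))
          = (1/Real.pi) * (Real.cos (((t:ℝ)+(u:ℝ)) * ((2*(h:ℝ)-1) * Real.pi / (2*(n:ℝ))))
            + Real.cos (((t:ℝ)-(u:ℝ)) * ((2*(h:ℝ)-1) * Real.pi / (2*(n:ℝ))))) := by
        intro h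
        set θ := (2*(h:ℝ)-1) * Real.pi / (2*(n:ℝ))
        have sq : Real.sqrt (2/Real.pi) * Real.sqrt (2/Real.pi) = 2/Real.pi :=
          Real.mul_self_sqrt (by positivity)
        have trig : Real.cos (((t:ℝ)+(u:ℝ)) * θ) + Real.cos (((t:ℝ)-(u:ℝ)) * θ)
            = 2 * Real.cos ((t:ℝ)*θ) * Real.cos ((u:ℝ)*θ) := by
          rw [show ((t:ℝ)+(u:ℝ)) * θ = (t:ℝ)*θ + (u:ℝ)*θ by ring,
            show ((t:ℝ)-(u:ℝ)) * θ = (t:ℝ)*θ - (u:ℝ)*θ by ring,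
            Real.cos_add, Real.cos_sub]
          ring
        calc (Real.sqrt (2/Real.pi) * Real.cos ((t:ℝ)*θ)) * (Real.sqrt (2/Real.pi) * Real.cos ((u:ℝ)*θ))
            = (2/Real.pi) * (Real.cos ((t:ℝ)*θ) * Real.cos ((u:ℝ)*θ)) := by
              rw [show (Real.sqrt (2/Real.pi) * Real.cos ((t:ℝ)*θ)) * (Real.sqrt (2/Real.pi) * Real.cos ((u:ℝ)*θ))
                = (Real.sqrt (2/Real.pi) * Real.sqrt (2/Real.pi)) * (Real.cos ((t:ℝ)*θ) * Real.cos ((u:ℝ)*θ)) from by ring, sq]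
          _ = (1/Real.pi) * (Real.cos (((t:ℝ)+(u:ℝ)) * θ) + Real.cos (((t:ℝ)-(u:ℝ)) * θ)) := by
              rw [trig]; field_simp
      rw [Finset.sum_congr rfl (fun h _ => prod h)]
      rw [← Finset.mul_sum, Finset.sum_add_distrib]
      have S1 : ∑ h ∈ Finset.Icc 1 n,
          Real.cos (((t:ℝ)+(u:ℝ)) * ((2*(h:ℝ)-1) * Real.pi / (2*(n:ℝ)))) = 0 := by
        apply Szero n hn
        · apply sin_ne_zero_of_lt n hn _ (by positivity)
          rw [abs_of_nonneg (by positivity)]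
          push_cast
          have : (t:ℝ) + (u:ℝ) < 2*(n:ℝ) := by exact_mod_cast htu
          linarith
        · rw [show ((t:ℝ)+(u:ℝ)) * Real.pi = ((t+u:ℕ):ℝ) * Real.pi by push_cast; ring]
          exact Real.sin_nat_mul_pi (t+u)
      rw [S1]
      by_cases htu' : t = u
      · subst htu'
        rw [if_pos rfl]
        have : ∑ h ∈ Finset.Icc 1 n,
            Real.cos (((t:ℝ)-(t:ℝ)) * ((2*(h:ℝ)-1) * Real.pi / (2*(n:ℝ)))) = (n:ℝ) := by
          simp only [sub_self, zero_mul, Real.cos_zero]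
          rw [Finset.sum_const, Nat.card_Icc, Nat.add_sub_cancel, nsmul_eq_mul, mul_one]
        rw [this]
        field_simp
        simp
      · rw [if_neg htu']
        have S2 : ∑ h ∈ Finset.Icc 1 n,
            Real.cos (((t:ℝ)-(u:ℝ)) * ((2*(h:ℝ)-1) * Real.pi / (2*(n:ℝ)))) = 0 := by
          apply Szero n hn
          · apply sin_ne_zero_of_lt n hn
            · intro hh
              apply htu'
              have : (t:ℝ) = (u:ℝ) := by linarith [sub_eq_zero.1 hh]
              exact_mod_cast this
            · have h1 : (t:ℝ) < 2*(n:ℝ) := by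
                have : (t:ℕ) < 2*n := by omega
                exact_mod_cast this
              have h2 : (u:ℝ) < 2*(n:ℝ) := by
                have : (u:ℕ) < 2*n := by omega
                exact_mod_cast this
              have h3 : (0:ℝ) ≤ (t:ℝ) := Nat.cast_nonneg t
              have h4 : (0:ℝ) ≤ (u:ℝ) := Nat.cast_nonneg u
              rw [abs_lt]
              constructor <;> nlinarith
          · have h := Real.sin_int_mul_pi ((t:ℤ)-(u:ℤ))
            push_cast at h
            exact h
        rw [S2]
        ring


lemma intChebP (s u : ℕ) :
    IntervalIntegrable (fun x => x ^ s * chebP u x * chebW x) volume (-1 : ℝ) 1 := by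
  rcases Nat.eq_zero_or_pos u with h0 | h1
  · subst h0
    have : (fun x : ℝ => x ^ s * chebP 0 x * chebW x)
        = fun x : ℝ => Real.sqrt (1/Real.pi) * (x ^ s * Real.cos ((0:ℝ) * Real.arccos x) * chebW x) := by
      funext x; simp [chebP]; ring
    rw [this]
    exact (intCos s 0).const_mul _
  · have : (fun x : ℝ => x ^ s * chebP u x * chebW x)
        = fun x : ℝ => Real.sqrt (2/Real.pi) * (x ^ s * Real.cos ((u:ℝ) * Real.arccos x) * chebW x) := by
      funext x; simp only [chebP, if_neg (by omega : ¬ u = 0)]; ring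
    rw [this]
    exact (intCos s (u:ℝ)).const_mul _

lemma chebP_moment (s u : ℕ) (h : s < u) :
    (∫ x in (-1:ℝ)..1, x ^ s * chebP u x * chebW x) = 0 := by
  have : (fun x : ℝ => x ^ s * chebP u x * chebW x)
      = fun x : ℝ => Real.sqrt (2/Real.pi) * (x ^ s * Real.cos ((u:ℝ) * Real.arccos x) * chebW x) := by
    funext x; simp only [chebP, if_neg (by omega : ¬ u = 0)]; ring
  rw [intervalIntegral.integral_congr (fun x _ => congrFun this x),
    intervalIntegral.integral_const_mul, Jzero s u h, mul_zero]

lemma vpK_expand (N m : ℕ) (a : ℝ) (f : ℝ → ℝ) (x : ℝ) :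
    f x * vpK N m a x * chebW x
      = (1/(2*(m:ℝ))) * ∑ r ∈ Finset.Icc (N-m) (N+m-1), ∑ u ∈ Finset.range (r+1),
          chebP u a * (f x * chebP u x * chebW x) := by
  simp only [vpK, darboux, Finset.mul_sum, Finset.sum_mul]
  exact Finset.sum_congr rfl fun r _ => Finset.sum_congr rfl fun u _ => by ring

lemma intInt_sum {ι : Type*} (s : Finset ι) (F : ι → ℝ → ℝ)
    (h : ∀ i ∈ s, IntervalIntegrable (F i) volume (-1:ℝ) 1) :
    IntervalIntegrable (fun x => ∑ i ∈ s, F i x) volume (-1:ℝ) 1 := by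
  rw [show (fun x => ∑ i ∈ s, F i x) = ∑ i ∈ s, F i from by funext x; simp]
  exact IntervalIntegrable.sum s h

lemma intVpK (N m s : ℕ) (a : ℝ) :
    IntervalIntegrable (fun x => x ^ s * vpK N m a x * chebW x) volume (-1 : ℝ) 1 := by
  have : (fun x : ℝ => x ^ s * vpK N m a x * chebW x)
      = fun x : ℝ => (1/(2*(m:ℝ))) * ∑ r ∈ Finset.Icc (N-m) (N+m-1), ∑ u ∈ Finset.range (r+1),
          chebP u a * (x ^ s * chebP u x * chebW x) := by
    funext x; exact vpK_expand N m a (fun x => x ^ s) x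
  rw [this]
  exact (intInt_sum _ _ (fun r _ => intInt_sum _ _
    (fun u _ => (intChebP s u).const_mul _))).const_mul _

lemma moment_vpK (N m s : ℕ) (hm : 0 < m) (hmN : m ≤ N) (hs : s ≤ N - m) (a : ℝ) :
    (∫ x in (-1:ℝ)..1, x ^ s * vpK N m a x * chebW x)
      = ∑ u ∈ Finset.range (s+1), chebP u a *
          ∫ x in (-1:ℝ)..1, x ^ s * chebP u x * chebW x := by
  have hm' : (m:ℝ) ≠ 0 := Nat.cast_ne_zero.2 hm.ne'
  rw [intervalIntegral.integral_congr
      (fun x _ => vpK_expand N m a (fun x => x ^ s) x),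
    intervalIntegral.integral_const_mul,
    intervalIntegral.integral_finset_sum (fun r _ => intInt_sum _ _
      (fun u _ => (intChebP s u).const_mul _))]
  have step : ∀ r ∈ Finset.Icc (N-m) (N+m-1),
      (∫ x in (-1:ℝ)..1, ∑ u ∈ Finset.range (r+1), chebP u a * (x ^ s * chebP u x * chebW x))
      = ∑ u ∈ Finset.range (s+1), chebP u a *
          ∫ x in (-1:ℝ)..1, x ^ s * chebP u x * chebW x := by
    intro r hr
    rw [Finset.mem_Icc] at hr
    rw [intervalIntegral.integral_finset_sum (fun u _ => (intChebP s u).const_mul _)]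
    simp only [intervalIntegral.integral_const_mul]
    symm
    apply Finset.sum_subset
    · apply Finset.range_subset_range.2; omega
    · intro u hu hnu
      rw [Finset.mem_range] at hu hnu
      rw [chebP_moment s u (by omega), mul_zero]
  rw [Finset.sum_congr rfl step, Finset.sum_const, Nat.card_Icc]
  rw [show N + m - 1 + 1 - (N - m) = 2*m from by omega]
  rw [nsmul_eq_mul]
  push_cast
  field_simp

lemma scal_repr (n m : ℕ) (hm : 0 < m) (hmn : m < n) (u : ℕ) (hu : u ≤ n - m) (y : ℝ) :
    ∑ h ∈ Finset.Icc 1 n, scal n m h y * chebP u (chebNode n h) = chebP u y := by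
  have hn : 0 < n := lt_trans hm hmn
  have hm' : (m:ℝ) ≠ 0 := Nat.cast_ne_zero.2 hm.ne'
  have hn' : (n:ℝ) ≠ 0 := Nat.cast_ne_zero.2 hn.ne'
  have expand : ∀ h, scal n m h y * chebP u (chebNode n h)
      = (Real.pi/(n:ℝ)) * (1/(2*(m:ℝ))) * ∑ r ∈ Finset.Icc (n-m) (n+m-1), ∑ t ∈ Finset.range (r+1),
          chebP t y * (chebP t (chebNode n h) * chebP u (chebNode n h)) := by
    intro h
    simp only [scal, vpK, darboux, Finset.mul_sum, Finset.sum_mul]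
    exact Finset.sum_congr rfl fun r _ => Finset.sum_congr rfl fun t _ => by ring
  rw [Finset.sum_congr rfl (fun h _ => expand h)]
  rw [← Finset.mul_sum, Finset.sum_comm]
  have inner : ∀ r ∈ Finset.Icc (n-m) (n+m-1),
      (∑ h ∈ Finset.Icc 1 n, ∑ t ∈ Finset.range (r+1),
        chebP t y * (chebP t (chebNode n h) * chebP u (chebNode n h)))
      = ((n:ℝ)/Real.pi) * chebP u y := by
    intro r hr
    rw [Finset.mem_Icc] at hr
    rw [Finset.sum_comm]
    have hterm : ∀ t ∈ Finset.range (r+1),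
        (∑ h ∈ Finset.Icc 1 n, chebP t y * (chebP t (chebNode n h) * chebP u (chebNode n h)))
        = ((n:ℝ)/Real.pi) * (chebP t y * (if t = u then 1 else 0)) := by
      intro t ht
      rw [Finset.mem_range] at ht
      rw [← Finset.mul_sum]
      have horth := disc_orth n t u hn (by omega)
      have : (∑ h ∈ Finset.Icc 1 n, chebP t (chebNode n h) * chebP u (chebNode n h))
          = ((n:ℝ)/Real.pi) * (if t = u then 1 else 0) := by
        rw [← horth]
        field_simp
      rw [this]; ring
    rw [Finset.sum_congr rfl hterm, ← Finset.mul_sum]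
    congr 1
    have : ∀ t ∈ Finset.range (r+1), chebP t y * (if t = u then 1 else 0)
        = if t = u then chebP t y else 0 := by
      intro t _; split <;> simp
    rw [Finset.sum_congr rfl this, Finset.sum_ite_eq' (Finset.range (r+1)) u (fun t => chebP t y),
      if_pos (Finset.mem_range.2 (by omega))]
  rw [Finset.sum_congr rfl inner, Finset.sum_const, Nat.card_Icc]
  rw [show n + m - 1 + 1 - (n - m) = 2*m from by omega]
  rw [nsmul_eq_mul]
  push_cast
  have hπ : Real.pi ≠ 0 := Real.pi_ne_zero
  field_simp

theorem wav_vanishing_moments (n m : ℕ) (hm : 0 < m) (hmn : m < n)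
    (k : ℕ) (hk : k ∈ Finset.Icc 1 (2 * n)) (s : ℕ) (hs : s ≤ n - m) :
    (∫ x in (-1 : ℝ)..1, x ^ s * wav n m k x * chebW x) = 0 := by
  have hn : 0 < n := lt_trans hm hmn
  set y : ℝ := yNode n k with hy
  have integrand_eq : ∀ x ∈ Set.uIcc (-1:ℝ) 1, x ^ s * wav n m k x * chebW x
      = (Real.pi/(3*(n:ℝ))) * (x ^ s * vpK (3*n) m y x * chebW x)
        - ∑ h ∈ Finset.Icc 1 n, scal n m h y *
            ((Real.pi/(3*(n:ℝ))) * (x ^ s * vpK (3*n) m (chebNode n h) x * chebW x)) := by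
    intro x _
    simp only [wav, mul_sub, sub_mul, Finset.sum_mul, Finset.mul_sum, ← hy]
    congr 1
    · ring
    · exact Finset.sum_congr rfl fun h _ => by ring
  rw [intervalIntegral.integral_congr integrand_eq]
  rw [intervalIntegral.integral_sub ((intVpK (3*n) m s y).const_mul _)
    (intInt_sum _ _ (fun h _ => ((intVpK (3*n) m s (chebNode n h)).const_mul _).const_mul _))]
  rw [intervalIntegral.integral_finset_sum
    (fun h _ => ((intVpK (3*n) m s (chebNode n h)).const_mul _).const_mul _)]
  simp only [intervalIntegral.integral_const_mul]
  have hm3 : m ≤ 3*n := by omega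
  have hs3 : s ≤ 3*n - m := by omega
  simp only [moment_vpK (3*n) m s hm hm3 hs3]
  have key : ∑ h ∈ Finset.Icc 1 n, scal n m h y *
      (Real.pi/(3*(n:ℝ)) * ∑ u ∈ Finset.range (s+1), chebP u (chebNode n h) *
        ∫ x in (-1:ℝ)..1, x ^ s * chebP u x * chebW x)
      = Real.pi/(3*(n:ℝ)) * ∑ u ∈ Finset.range (s+1), chebP u y *
          ∫ x in (-1:ℝ)..1, x ^ s * chebP u x * chebW x := by
    have swap : ∑ h ∈ Finset.Icc 1 n, scal n m h y *
        (Real.pi/(3*(n:ℝ)) * ∑ u ∈ Finset.range (s+1), chebP u (chebNode n h) *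
          ∫ x in (-1:ℝ)..1, x ^ s * chebP u x * chebW x)
        = Real.pi/(3*(n:ℝ)) * ∑ u ∈ Finset.range (s+1),
            (∑ h ∈ Finset.Icc 1 n, scal n m h y * chebP u (chebNode n h)) *
            ∫ x in (-1:ℝ)..1, x ^ s * chebP u x * chebW x := by
      simp only [Finset.mul_sum, Finset.sum_mul]
      rw [Finset.sum_comm]
      exact Finset.sum_congr rfl fun u _ => Finset.sum_congr rfl fun h _ => by ring
    rw [swap]
    congr 1
    refine Finset.sum_congr rfl fun u hu => ?_
    rw [Finset.mem_range] at hu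
    rw [scal_repr n m hm hmn u (by omega) y]
  rw [key]
  ring
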